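/- For every natural number m and real numbers a_1, ..., a_p with a_1^2 + ... + a_p^2 = 1, the m-th (probabilists') Hermite polynomial satisfies the addition formula: H_m(a_1 x_1 + ... + a_p x_p) = Σ_{m_1+...+m_p = m} (m!/(m_1!···m_p!)) ∏_{j=1}^p a_j^{m_j} H_{m_j}(x_j), for all real x_1, ..., x_p. -/

import Mathlib

open Polynomial Finset


lemma hermite_deriv (n : ℕ) :
    derivative (hermite n) = (n : Polynomial ℤ) * hermite (n - 1) := by
  induction n with
  | zero => simp [hermite_zero]
  | succ n ih =>
    rw [hermite_succ, derivative_sub, derivative_mul, derivative_X, one_mul, ih,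
      derivative_mul, derivative_natCast, zero_mul, zero_add]
    cases n with
    | zero => simp [hermite_zero]
    | succ k =>
      simp only [Nat.succ_sub_one]
      push_cast
      linear_combination ((k : Polynomial ℤ) + 1) * (hermite_succ k).symm

lemma aeval_hermite_succ (r : ℝ) (n : ℕ) :
    (aeval r (hermite (n + 1)) : ℝ) =
      r * aeval r (hermite n) - n * aeval r (hermite (n - 1)) := by
  rw [hermite_succ, map_sub, map_mul, aeval_X, hermite_deriv, map_mul]
  simp

lemma sum_split {p : ℕ} (i : Fin p) (f : Fin p → ℕ) :
    ∑ j, f j = f i + ∑ x ∈ univ \ {i}, f x := by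
  rw [← Finset.sum_update_of_mem (mem_univ i) f (f i), Function.update_eq_self]

lemma reindex_aux {p n : ℕ} (i : Fin p) (g : (Fin p → ℕ) → ℝ)
    (hg : ∀ μ, μ i = 0 → g μ = 0) :
    ∑ μ ∈ Finset.Nat.antidiagonalTuple p (n + 1), g μ
      = ∑ ν ∈ Finset.Nat.antidiagonalTuple p n, g (Function.update ν i (ν i + 1)) := by
  rw [← Finset.sum_filter_of_ne (p := fun μ => μ i ≠ 0)
      (fun μ _ h h0 => h (hg μ h0))]
  refine Finset.sum_nbij' (fun μ => Function.update μ i (μ i - 1))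
    (fun ν => Function.update ν i (ν i + 1)) ?_ ?_ ?_ ?_ ?_
  · intro μ hμ
    simp only [mem_filter, Finset.Nat.mem_antidiagonalTuple] at hμ ⊢
    obtain ⟨hsum, hne⟩ := hμ
    rw [sum_split i] at hsum
    rw [Finset.sum_update_of_mem (mem_univ i)]
    omega
  · intro ν hν
    simp only [mem_filter, Finset.Nat.mem_antidiagonalTuple] at hν ⊢
    rw [sum_split i] at hν
    refine ⟨?_, by simp⟩
    rw [Finset.sum_update_of_mem (mem_univ i)]
    omega
  · intro μ hμ
    simp only [mem_filter] at hμ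
    have hpos : 0 < μ i := Nat.pos_of_ne_zero hμ.2
    simp only [Function.update_idem, Function.update_self]
    rw [show μ i - 1 + 1 = μ i by omega, Function.update_eq_self]
  · intro ν hν
    simp [Function.update_idem, Function.update_self, Function.update_eq_self]
  · intro μ hμ
    simp only [mem_filter] at hμ
    have hpos : 0 < μ i := Nat.pos_of_ne_zero hμ.2
    congr 1
    simp only [Function.update_idem, Function.update_self]
    rw [show μ i - 1 + 1 = μ i by omega, Function.update_eq_self]

/-- product term -/
noncomputable def Pt {p : ℕ} (a x : Fin p → ℝ) (μ : Fin p → ℕ) : ℝ :=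
  ∏ j, (a j) ^ (μ j) * (Polynomial.aeval (x j) (Polynomial.hermite (μ j)) : ℝ)

/-- the right-hand side sum -/
noncomputable def Rs {p : ℕ} (a x : Fin p → ℝ) (m : ℕ) : ℝ :=
  ∑ μ ∈ Finset.Nat.antidiagonalTuple p m,
    ((m.factorial : ℝ) / ∏ j, ((μ j).factorial : ℝ)) * Pt a x μ

lemma Pt_update {p : ℕ} (a x : Fin p → ℝ) (μ : Fin p → ℕ) (i : Fin p) (b : ℕ) :
    Pt a x (Function.update μ i b)
      = (a i ^ b * (aeval (x i) (hermite b) : ℝ)) *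
        ∏ j ∈ univ \ {i}, (a j) ^ (μ j) * (aeval (x j) (hermite (μ j)) : ℝ) := by
  have h : ∀ j, (a j) ^ (Function.update μ i b j) *
        (aeval (x j) (hermite (Function.update μ i b j)) : ℝ)
      = Function.update (fun j => (a j) ^ (μ j) * (aeval (x j) (hermite (μ j)) : ℝ)) i
          (a i ^ b * (aeval (x i) (hermite b) : ℝ)) j := by
    intro j
    rcases eq_or_ne j i with rfl | hj
    · simp
    · simp [Function.update_of_ne hj]
  unfold Pt
  simp only [h]
  rw [Finset.prod_update_of_mem (mem_univ i)]

lemma Pt_split {p : ℕ} (a x : Fin p → ℝ) (μ : Fin p → ℕ) (i : Fin p) :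
    Pt a x μ
      = (a i ^ (μ i) * (aeval (x i) (hermite (μ i)) : ℝ)) *
        ∏ j ∈ univ \ {i}, (a j) ^ (μ j) * (aeval (x j) (hermite (μ j)) : ℝ) := by
  conv_lhs => rw [show μ = Function.update μ i (μ i) from (Function.update_eq_self i μ).symm]
  rw [Pt_update]

lemma fact_update {p : ℕ} (μ : Fin p → ℕ) (i : Fin p) (b : ℕ) :
    ∏ j, (((Function.update μ i b) j).factorial : ℝ)
      = (b.factorial : ℝ) * ∏ j ∈ univ \ {i}, ((μ j).factorial : ℝ) := by
  have h : ∀ j, (((Function.update μ i b) j).factorial : ℝ)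
      = Function.update (fun j => ((μ j).factorial : ℝ)) i (b.factorial : ℝ) j := by
    intro j
    rcases eq_or_ne j i with rfl | hj
    · simp
    · simp [Function.update_of_ne hj]
  simp only [h]
  rw [Finset.prod_update_of_mem (mem_univ i)]

lemma fact_split {p : ℕ} (μ : Fin p → ℕ) (i : Fin p) :
    ∏ j, ((μ j).factorial : ℝ)
      = ((μ i).factorial : ℝ) * ∏ j ∈ univ \ {i}, ((μ j).factorial : ℝ) := by
  conv_lhs => rw [show μ = Function.update μ i (μ i) from (Function.update_eq_self i μ).symm]
  rw [fact_update]

lemma key_pointwise {p : ℕ} (a x : Fin p → ℝ) (μ : Fin p → ℕ) (i : Fin p) :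
    a i * x i * Pt a x μ
      = Pt a x (Function.update μ i (μ i + 1))
        + (μ i : ℝ) * (a i) ^ 2 * Pt a x (Function.update μ i (μ i - 1)) := by
  rw [Pt_split a x μ i, Pt_update, Pt_update, aeval_hermite_succ (x i) (μ i)]
  cases h : μ i with
  | zero =>
    simp only [h, Nat.cast_zero, pow_zero, Nat.zero_sub, zero_mul, add_zero, zero_add,
      Nat.cast_ofNat, hermite_zero]
    ring
  | succ k =>
    simp only [Nat.succ_sub_one, Nat.add_sub_cancel]
    push_cast
    ring

lemma firstPart {p : ℕ} (a x : Fin p → ℝ) (n : ℕ) :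
    ∑ i, ∑ μ ∈ Finset.Nat.antidiagonalTuple p n,
        ((n.factorial : ℝ) / ∏ j, ((μ j).factorial : ℝ)) * Pt a x (Function.update μ i (μ i + 1))
      = Rs a x (n + 1) := by
  have h1 : ∀ i : Fin p,
      ∑ ν ∈ Finset.Nat.antidiagonalTuple p (n + 1),
        ((ν i : ℝ) / (n + 1)) * ((((n+1).factorial : ℝ) / ∏ j, ((ν j).factorial : ℝ)) * Pt a x ν)
      = ∑ μ ∈ Finset.Nat.antidiagonalTuple p n,
        ((n.factorial : ℝ) / ∏ j, ((μ j).factorial : ℝ)) * Pt a x (Function.update μ i (μ i + 1)) := by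
    intro i
    rw [reindex_aux i _ (fun μ h => by simp [h])]
    refine Finset.sum_congr rfl fun μ hμ => ?_
    rw [Function.update_self, fact_update, fact_split μ i]
    have h2 : (0:ℝ) < ∏ j ∈ univ \ {i}, ((μ j).factorial : ℝ) := by
      apply Finset.prod_pos; intro j _; exact_mod_cast (μ j).factorial_pos
    have h3 : (0:ℝ) < ((μ i).factorial : ℝ) := by exact_mod_cast (μ i).factorial_pos
    rw [Nat.factorial_succ (μ i), Nat.factorial_succ n]
    push_cast
    field_simp
  rw [show (∑ i, ∑ μ ∈ Finset.Nat.antidiagonalTuple p n,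
      ((n.factorial : ℝ) / ∏ j, ((μ j).factorial : ℝ)) * Pt a x (Function.update μ i (μ i + 1)))
    = ∑ i, ∑ ν ∈ Finset.Nat.antidiagonalTuple p (n + 1),
        ((ν i : ℝ) / (n + 1)) * ((((n+1).factorial : ℝ) / ∏ j, ((ν j).factorial : ℝ)) * Pt a x ν)
    from (Finset.sum_congr rfl fun i _ => (h1 i).symm)]
  rw [Finset.sum_comm]
  unfold Rs
  refine Finset.sum_congr rfl fun ν hν => ?_
  rw [Finset.Nat.mem_antidiagonalTuple] at hν
  have hs : ∑ i, (ν i : ℝ) = (n + 1 : ℝ) := by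
    rw [← Nat.cast_sum, hν]; push_cast; ring
  rw [← Finset.sum_mul, ← Finset.sum_div, hs, div_self (by positivity : (n:ℝ) + 1 ≠ 0), one_mul]

lemma secondPart {p : ℕ} (a x : Fin p → ℝ) (n : ℕ) :
    ∑ i, ∑ μ ∈ Finset.Nat.antidiagonalTuple p (n + 1),
        (((n+1).factorial : ℝ) / ∏ j, ((μ j).factorial : ℝ)) *
          ((μ i : ℝ) * (a i) ^ 2 * Pt a x (Function.update μ i (μ i - 1)))
      = (∑ i, (a i) ^ 2) * ((n + 1 : ℝ) * Rs a x n) := by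
  have h1 : ∀ i : Fin p,
      ∑ μ ∈ Finset.Nat.antidiagonalTuple p (n + 1),
        (((n+1).factorial : ℝ) / ∏ j, ((μ j).factorial : ℝ)) *
          ((μ i : ℝ) * (a i) ^ 2 * Pt a x (Function.update μ i (μ i - 1)))
      = (a i) ^ 2 * ((n + 1 : ℝ) * Rs a x n) := by
    intro i
    rw [reindex_aux i _ (fun μ h => by simp [h])]
    rw [Rs, Finset.mul_sum, Finset.mul_sum]
    refine Finset.sum_congr rfl fun ν hν => ?_
    simp only [Function.update_self, Function.update_idem, Nat.add_sub_cancel,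
      Function.update_eq_self]
    rw [fact_update, fact_split ν i]
    have h2 : (0:ℝ) < ∏ j ∈ univ \ {i}, ((ν j).factorial : ℝ) := by
      apply Finset.prod_pos; intro j _; exact_mod_cast (ν j).factorial_pos
    have h3 : (0:ℝ) < ((ν i).factorial : ℝ) := by exact_mod_cast (ν i).factorial_pos
    rw [Nat.factorial_succ (ν i), Nat.factorial_succ n]
    push_cast
    field_simp
  rw [Finset.sum_congr rfl fun i _ => h1 i, ← Finset.sum_mul]

lemma step {p : ℕ} (a x : Fin p → ℝ) (ha : ∑ j, (a j) ^ 2 = 1) (n : ℕ) :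
    (∑ j, a j * x j) * Rs a x n = Rs a x (n + 1) + (n : ℝ) * Rs a x (n - 1) := by
  have expand : (∑ j, a j * x j) * Rs a x n
      = (∑ i, ∑ μ ∈ Finset.Nat.antidiagonalTuple p n,
          ((n.factorial : ℝ) / ∏ j, ((μ j).factorial : ℝ)) * Pt a x (Function.update μ i (μ i + 1)))
        + ∑ i, ∑ μ ∈ Finset.Nat.antidiagonalTuple p n,
          ((n.factorial : ℝ) / ∏ j, ((μ j).factorial : ℝ)) *
            ((μ i : ℝ) * (a i) ^ 2 * Pt a x (Function.update μ i (μ i - 1))) := by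
    rw [Rs, Finset.sum_mul, ← Finset.sum_add_distrib]
    refine Finset.sum_congr rfl fun i _ => ?_
    rw [Finset.mul_sum, ← Finset.sum_add_distrib]
    refine Finset.sum_congr rfl fun μ _ => ?_
    rw [show a i * x i * (((n.factorial : ℝ) / ∏ j, ((μ j).factorial : ℝ)) * Pt a x μ)
        = ((n.factorial : ℝ) / ∏ j, ((μ j).factorial : ℝ)) * (a i * x i * Pt a x μ) by ring,
      key_pointwise, mul_add]
  rw [expand, firstPart]
  cases n with
  | zero =>
    simp [Finset.Nat.antidiagonalTuple_zero_right]
  | succ k =>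
    rw [secondPart, ha, one_mul]
    push_cast
    ring

/-- Hermite addition formula: for `a₁² + ⋯ + a_p² = 1`,
`H_m(∑ aⱼ xⱼ) = ∑_{m₁+⋯+m_p = m} m!/(m₁!⋯m_p!) ∏ⱼ aⱼ^{mⱼ} H_{mⱼ}(xⱼ)`. -/
theorem hermite_addition_formula (m p : ℕ) (a x : Fin p → ℝ)
    (ha : ∑ j, (a j) ^ 2 = 1) :
    (Polynomial.aeval (∑ j, a j * x j) (Polynomial.hermite m) : ℝ) =
      ∑ μ ∈ Finset.Nat.antidiagonalTuple p m,
        ((m.factorial : ℝ) / ∏ j, ((μ j).factorial : ℝ)) *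
          ∏ j, (a j) ^ (μ j) * (Polynomial.aeval (x j) (Polynomial.hermite (μ j)) : ℝ) := by
  have key : ∀ m : ℕ, (aeval (∑ j, a j * x j) (hermite m) : ℝ) = Rs a x m := by
    intro m
    induction m using Nat.strong_induction_on with
    | _ m ih =>
      match m with
      | 0 =>
        simp [Rs, Pt, Finset.Nat.antidiagonalTuple_zero_right, hermite_zero]
      | (n + 1) =>
        rw [aeval_hermite_succ, ih n (by omega), ih (n - 1) (by omega)]
        have := step a x ha n
        linarith
  exact key m
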